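/- Let Ω ⊂ ℝⁿ be a bounded smooth domain and u a 2-convex solution of σ₂(D²u) = 1 in Ω with u = 0 on ∂Ω. Then the mean curvature of ∂Ω is strictly positive at every boundary point. -/

import Mathlib

open scoped BigOperators

noncomputable def sigma2M {m : ℕ} (A : Matrix (Fin m) (Fin m) ℝ) : ℝ :=
  ((A.trace) ^ 2 - (A * A).trace) / 2

/-- The Hessian matrix D²u(x). -/
noncomputable def hess {m : ℕ} (u : (Fin m → ℝ) → ℝ) (x : Fin m → ℝ) :
    Matrix (Fin m) (Fin m) ℝ :=
  Matrix.of fun i j => iteratedFDeriv ℝ 2 u x ![Pi.single i 1, Pi.single j 1]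

/-!
Since `tr D²u > 0`, the weak maximum principle gives `u ≤ 0` in `Ω`, so `u_n(0) ≤ 0` for the inner
normal `eₙ`. Differentiating `u = 0` twice along the boundary graph gives
`u_{ii}(0) = -u_n(0) φ_{ii}(0)` for `i < n`. By continuity `D²u(0)` still has nonnegative trace and
`σ₂ = 1`; as `σ₂` of a symmetric matrix is at most `σ₂` of its diagonal, the tangential trace
`Σ_{i<n} u_{ii}(0) = -u_n(0) Δφ(0)` is positive, hence `Δφ(0) > 0` (and `u_n(0) < 0`, without
the Hopf lemma).
-/

open Filter Topology

section Sigma2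

variable {m : ℕ}

lemma sigma2M_diagonal (d : Fin m → ℝ) :
    sigma2M (Matrix.diagonal d) = ((∑ i, d i) ^ 2 - ∑ i, d i ^ 2) / 2 := by
  simp [sigma2M, Matrix.trace_diagonal, sq]

lemma sigma2M_le_sigma2M_diagonal_diag {A : Matrix (Fin m) (Fin m) ℝ} (hA : A.IsSymm) :
    sigma2M A ≤ sigma2M (Matrix.diagonal A.diag) := by
  have hsq : ∀ i, A i i ^ 2 ≤ (A * A) i i := fun i => by
    rw [Matrix.mul_apply, sq]
    refine Finset.single_le_sum (f := fun j => A i j * A j i) (fun j _ => ?_) (Finset.mem_univ i)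
    rw [hA.apply i j]
    exact mul_self_nonneg _
  rw [sigma2M_diagonal, sigma2M]
  have := Finset.sum_le_sum fun i (_ : i ∈ Finset.univ) => hsq i
  simp only [Matrix.trace, Matrix.diag] at this ⊢
  linarith

lemma continuous_sigma2M : Continuous (sigma2M (m := m)) := by
  unfold sigma2M
  fun_prop

lemma sum_castSucc_pos_of_sigma2M_diagonal_pos {n : ℕ} {d : Fin (n + 1) → ℝ}
    (hsum : 0 ≤ ∑ i, d i) (hσ : 0 < sigma2M (Matrix.diagonal d)) :
    0 < ∑ i : Fin n, d i.castSucc := by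
  rw [sigma2M_diagonal] at hσ
  simp only [Fin.sum_univ_castSucc] at hsum hσ
  have hsq : 0 ≤ ∑ i : Fin n, d i.castSucc ^ 2 := Finset.sum_nonneg fun i _ => sq_nonneg _
  by_contra! hT
  nlinarith

end Sigma2

section SecondOrder

variable {E : Type*} [NormedAddCommGroup E] [NormedSpace ℝ E] {u : E → ℝ}

lemma hasDerivAt_fderiv_apply_comp {γ γ' : ℝ → E} {a : E} {t₀ : ℝ}
    (hu : ContDiffAt ℝ 2 u (γ t₀)) (hγ : HasDerivAt γ (γ' t₀) t₀) (hγ' : HasDerivAt γ' a t₀) :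
    HasDerivAt (fun t => fderiv ℝ u (γ t) (γ' t))
      (fderiv ℝ (fderiv ℝ u) (γ t₀) (γ' t₀) (γ' t₀) + fderiv ℝ u (γ t₀) a) t₀ := by
  have hDu : HasFDerivAt (fderiv ℝ u) (fderiv ℝ (fderiv ℝ u) (γ t₀)) (γ t₀) :=
    ((hu.fderiv_right le_rfl).differentiableAt one_ne_zero).hasFDerivAt
  exact (hDu.comp_hasDerivAt t₀ hγ).clm_apply hγ'

lemma fderiv_fderiv_add_fderiv_eq_zero_of_comp_eq_zero {γ γ' : ℝ → E} {a : E} {t₀ : ℝ}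
    (hu : ContDiffAt ℝ 2 u (γ t₀)) (hγ : ∀ᶠ t in 𝓝 t₀, HasDerivAt γ (γ' t) t)
    (hγ' : HasDerivAt γ' a t₀) (hzero : ∀ᶠ t in 𝓝 t₀, u (γ t) = 0) :
    fderiv ℝ (fderiv ℝ u) (γ t₀) (γ' t₀) (γ' t₀) + fderiv ℝ u (γ t₀) a = 0 := by
  have hdiff : ∀ᶠ t in 𝓝 t₀, DifferentiableAt ℝ u (γ t) :=
    hγ.self_of_nhds.continuousAt.eventually
      ((hu.eventually (by simp)).mono fun _ h => h.differentiableAt two_ne_zero)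
  have hfirst : (fun t => fderiv ℝ u (γ t) (γ' t)) =ᶠ[𝓝 t₀] fun _ => 0 := by
    filter_upwards [hzero.eventually_nhds, hγ, hdiff] with t hzero_t hγt hdt
    exact (hdt.hasFDerivAt.comp_hasDerivAt t hγt).unique
      ((hasDerivAt_const t 0).congr_of_eventuallyEq hzero_t)
  exact (hasDerivAt_fderiv_apply_comp hu hγ.self_of_nhds hγ').unique
    ((hasDerivAt_const t₀ 0).congr_of_eventuallyEq hfirst)

lemma IsLocalMax.deriv_deriv_nonpos_of_hasDerivAt {f f' : ℝ → ℝ} {x₀ c : ℝ} (h : IsLocalMax f x₀)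
    (hf : ∀ᶠ x in 𝓝 x₀, HasDerivAt f (f' x) x) (hf' : HasDerivAt f' c x₀) : c ≤ 0 := by
  -- if `c > 0`, the second derivative test makes `x₀` a local min too, so `f` is locally constant
  by_contra! hc
  have hderiv : deriv f =ᶠ[𝓝 x₀] f' := hf.mono fun x hx => hx.deriv
  have hmin : IsLocalMin f x₀ :=
    isLocalMin_of_deriv_deriv_pos (by rwa [hderiv.deriv_eq, hf'.deriv])
      (by rw [hderiv.self_of_nhds]; exact h.hasDerivAt_eq_zero hf.self_of_nhds)
      hf.self_of_nhds.continuousAt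
  have hconst : f =ᶠ[𝓝 x₀] fun _ => f x₀ := by
    filter_upwards [h, hmin] with x hmax_x hmin_x
    exact le_antisymm hmax_x hmin_x
  have hf'_zero : f' =ᶠ[𝓝 x₀] fun _ => 0 := by
    filter_upwards [hconst.eventually_nhds, hf] with x hconst_x hfx
    exact hfx.unique ((hasDerivAt_const x (f x₀)).congr_of_eventuallyEq hconst_x)
  have := hf'.unique ((hasDerivAt_const x₀ 0).congr_of_eventuallyEq hf'_zero)
  linarith

lemma IsLocalMax.fderiv_fderiv_apply_self_nonpos {p : E} (h : IsLocalMax u p)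
    (hu : ContDiffAt ℝ 2 u p) (v : E) : fderiv ℝ (fderiv ℝ u) p v v ≤ 0 := by
  have hline : ∀ t : ℝ, HasDerivAt (fun t : ℝ => p + t • v) v t := fun t => by
    simpa using ((hasDerivAt_id t).smul_const v).const_add p
  have hdiff : ∀ᶠ t in 𝓝 (0 : ℝ), DifferentiableAt ℝ u (p + t • v) :=
    (hline 0).continuousAt.eventually (by
      simpa using (hu.eventually (by simp)).mono fun _ h => h.differentiableAt two_ne_zero)
  have hmax : IsLocalMax (fun t : ℝ => u (p + t • v)) 0 :=
    IsLocalMax.comp_continuous (g := fun t : ℝ => p + t • v) (by simpa using h)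
      (hline 0).continuousAt
  refine hmax.deriv_deriv_nonpos_of_hasDerivAt
    (hdiff.mono fun t ht => ht.hasFDerivAt.comp_hasDerivAt t (hline t)) ?_
  simpa using hasDerivAt_fderiv_apply_comp (γ' := fun _ => v) (by simpa using hu) (hline 0)
    (hasDerivAt_const 0 v)

end SecondOrder

section Hessian

variable {m : ℕ} {u : (Fin m → ℝ) → ℝ}

lemma hess_apply (x : Fin m → ℝ) (i j : Fin m) :
    hess u x i j = fderiv ℝ (fderiv ℝ u) x (Pi.single i 1) (Pi.single j 1) := by
  simp [hess, iteratedFDeriv_two_apply]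

lemma hess_isSymm {x : Fin m → ℝ} (hu : ContDiffAt ℝ 2 u x) : (hess u x).IsSymm :=
  Matrix.IsSymm.ext fun i j => by
    rw [hess_apply, hess_apply]
    exact (hu.isSymmSndFDerivAt (by simp [minSmoothness_of_isRCLikeNormedField])).eq _ _

lemma continuousOn_hess {V : Set (Fin m → ℝ)} (hV : IsOpen V) (hu : ContDiffOn ℝ 2 u V) :
    ContinuousOn (hess u) V := by
  have hD2 : ContinuousOn (iteratedFDeriv ℝ 2 u) V :=
    (hu.continuousOn_iteratedFDerivWithin le_rfl hV.uniqueDiffOn).congr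
      fun x hx => (iteratedFDerivWithin_of_isOpen 2 hV hx).symm
  refine continuousOn_pi.2 fun i => continuousOn_pi.2 fun j => ?_
  exact (continuous_eval_const _).comp_continuousOn hD2

lemma IsLocalMax.trace_hess_nonpos {p : Fin m → ℝ} (h : IsLocalMax u p)
    (hu : ContDiffAt ℝ 2 u p) : (hess u p).trace ≤ 0 :=
  Finset.sum_nonpos fun i _ => by
    simpa only [Matrix.diag, hess_apply] using h.fderiv_fderiv_apply_self_nonpos hu _

lemma nonpos_of_trace_hess_pos {Ω V : Set (Fin m → ℝ)} (hΩ : Bornology.IsBounded Ω)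
    (hV : IsOpen V) (hΩV : closure Ω ⊆ V) (hu : ContDiffOn ℝ 2 u V)
    (htr : ∀ x ∈ Ω, 0 < (hess u x).trace) (hbc : ∀ x ∈ frontier Ω, u x ≤ 0) :
    ∀ x ∈ closure Ω, u x ≤ 0 := by
  intro x hx
  obtain ⟨p, hp, hmax⟩ :=
    hΩ.isCompact_closure.exists_isMaxOn ⟨x, hx⟩ (hu.continuousOn.mono hΩV)
  refine (hmax hx).trans ?_
  by_cases hpf : p ∈ frontier Ω
  · exact hbc p hpf
  have hpi : p ∈ interior Ω := by rw [← closure_sdiff_frontier]; exact ⟨hp, hpf⟩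
  have hlocal : IsLocalMax u p :=
    hmax.isLocalMax (mem_interior_iff_mem_nhds.1 (interior_mono subset_closure hpi))
  have := hlocal.trace_hess_nonpos (hu.contDiffAt (hV.mem_nhds (hΩV hp)))
  linarith [htr p (interior_subset hpi)]

end Hessian

section Graph

variable {n : ℕ} {Ω U : Set (Fin (n + 1) → ℝ)} {φ : (Fin n → ℝ) → ℝ}

lemma tendsto_add_smul_single_last (x : Fin (n + 1) → ℝ) :
    Tendsto (fun t : ℝ => x + t • Pi.single (Fin.last n) 1) (𝓝 0) (𝓝 x) := by
  have : Continuous fun t : ℝ => x + t • Pi.single (Fin.last n) (1 : ℝ) := by fun_prop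
  simpa using this.tendsto 0

lemma eventually_add_smul_single_last_mem
    (hUeq : Ω ∩ U = {x ∈ U | φ (fun i => x i.castSucc) < x (Fin.last n)})
    {x : Fin (n + 1) → ℝ} (hU : U ∈ 𝓝 x) (hle : φ (fun i => x i.castSucc) ≤ x (Fin.last n)) :
    ∀ᶠ t in 𝓝[>] (0 : ℝ), x + t • Pi.single (Fin.last n) 1 ∈ Ω := by
  filter_upwards [nhdsWithin_le_nhds (tendsto_add_smul_single_last x hU), self_mem_nhdsWithin]
    with t htU (ht : 0 < t)
  have hmem : x + t • Pi.single (Fin.last n) 1 ∈ Ω ∩ U := by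
    rw [hUeq]
    refine ⟨htU, ?_⟩
    simp only [Pi.add_apply, Pi.smul_apply, Pi.single_apply, Fin.castSucc_ne_last, if_false,
      if_true, smul_eq_mul, mul_zero, mul_one, add_zero]
    linarith
  exact hmem.1

lemma mem_frontier_of_eq_graph
    (hUeq : Ω ∩ U = {x ∈ U | φ (fun i => x i.castSucc) < x (Fin.last n)})
    {x : Fin (n + 1) → ℝ} (hU : U ∈ 𝓝 x) (heq : φ (fun i => x i.castSucc) = x (Fin.last n)) :
    x ∈ frontier Ω := by
  refine ⟨mem_closure_of_tendsto ?_ (eventually_add_smul_single_last_mem hUeq hU heq.le), ?_⟩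
  · exact (tendsto_add_smul_single_last x).mono_left nhdsWithin_le_nhds
  · intro hx
    have hmem : x ∈ Ω ∩ U := ⟨interior_subset hx, mem_of_mem_nhds hU⟩
    rw [hUeq] at hmem
    exact hmem.2.ne heq

/-- Differentiate `u = 0` twice along the boundary curve `t ↦ (t eᵢ, φ (t eᵢ))`. -/
lemma hess_castSucc_eq_of_graph
    (hUeq : Ω ∩ U = {x ∈ U | φ (fun i => x i.castSucc) < x (Fin.last n)}) (hU : U ∈ 𝓝 0)
    (hφ : ContDiff ℝ 2 φ) (hφ0 : φ 0 = 0) (hdφ0 : fderiv ℝ φ 0 = 0)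
    {u : (Fin (n + 1) → ℝ) → ℝ} (hu : ContDiffAt ℝ 2 u 0) (hbc : ∀ x ∈ frontier Ω, u x = 0)
    (i : Fin n) :
    hess u 0 i.castSucc i.castSucc = -fderiv ℝ u 0 (Pi.single (Fin.last n) 1) * hess φ 0 i i := by
  set δ : Fin n → ℝ := Pi.single i 1
  set eₙ : Fin (n + 1) → ℝ := Pi.single (Fin.last n) 1
  set ψ' : ℝ → ℝ := fun t => fderiv ℝ φ (t • δ) δ
  set γ : ℝ → Fin (n + 1) → ℝ := fun t => t • Pi.single i.castSucc 1 + φ (t • δ) • eₙ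
  have hline : ∀ t : ℝ, HasDerivAt (fun t : ℝ => t • δ) δ t := fun t => by
    simpa using (hasDerivAt_id t).smul_const δ
  have hγ : ∀ t, HasDerivAt γ (Pi.single i.castSucc 1 + ψ' t • eₙ) t := fun t => by
    have := ((hasDerivAt_id t).smul_const (Pi.single i.castSucc (1 : ℝ))).add
      (((hφ.differentiable two_ne_zero _).hasFDerivAt.comp_hasDerivAt t (hline t)).smul_const eₙ)
    rwa [one_smul] at this
  have hψ' : HasDerivAt ψ' (hess φ 0 i i) 0 := by
    simpa [hess_apply] using
      hasDerivAt_fderiv_apply_comp (γ' := fun _ => δ) hφ.contDiffAt (hline 0) (hasDerivAt_const 0 δ)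
  have hγ' : HasDerivAt (fun t => Pi.single i.castSucc 1 + ψ' t • eₙ) (hess φ 0 i i • eₙ) 0 :=
    (hψ'.smul_const eₙ).const_add _
  have hγ0 : γ 0 = 0 := by simp [γ, hφ0]
  have hγU : ∀ᶠ t in 𝓝 0, U ∈ 𝓝 (γ t) :=
    (hγ 0).continuousAt.eventually (by rwa [hγ0, eventually_mem_nhds_iff])
  have hboundary : ∀ᶠ t in 𝓝 0, u (γ t) = 0 := by
    filter_upwards [hγU] with t ht
    refine hbc _ (mem_frontier_of_eq_graph hUeq ht ?_)
    have hcoord : (fun j => γ t j.castSucc) = t • δ := by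
      ext j
      simp [γ, δ, eₙ, Pi.single_apply]
    rw [hcoord]
    simp [γ, eₙ, (Fin.castSucc_ne_last i).symm]
  have := fderiv_fderiv_add_fderiv_eq_zero_of_comp_eq_zero (hγ0 ▸ hu)
    (Eventually.of_forall hγ) hγ' hboundary
  simp only [hγ0, ψ', zero_smul, hdφ0, zero_apply, add_zero, map_smul, smul_eq_mul] at this
  rw [hess_apply]
  linarith

end Graph

/-- The boundary point is the origin and `∂Ω` is locally the graph `xₙ = φ(x')` with `φ(0) = 0`,
`Dφ(0) = 0` and `Ω` above it, so the mean curvature with respect to the outer normal is `Δφ(0)`. -/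
theorem mean_curvature_positive_general {n : ℕ}
    (Ω : Set (Fin (n + 1) → ℝ)) (hΩbd : Bornology.IsBounded Ω)
    (u : (Fin (n + 1) → ℝ) → ℝ)
    (V : Set (Fin (n + 1) → ℝ)) (hV : IsOpen V) (hΩV : closure Ω ⊆ V)
    (hu : ContDiffOn ℝ 2 u V)
    (hconv : ∀ x ∈ Ω, 0 < (hess u x).trace ∧ 0 < sigma2M (hess u x))
    (heq : ∀ x ∈ Ω, sigma2M (hess u x) = 1)
    (hbc : ∀ x ∈ frontier Ω, u x = 0)
    (φ : (Fin n → ℝ) → ℝ) (hφ : ContDiff ℝ 2 φ)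
    (hφ0 : φ 0 = 0) (hdφ0 : fderiv ℝ φ 0 = 0)
    (h0 : (0 : Fin (n + 1) → ℝ) ∈ frontier Ω)
    (hgraph : ∃ U ∈ nhds (0 : Fin (n + 1) → ℝ),
      Ω ∩ U = {x ∈ U | φ (fun i => x i.castSucc) < x (Fin.last n)}) :
    0 < ∑ i : Fin n, hess φ 0 i i := by
  obtain ⟨U, hU, hUeq⟩ := hgraph
  have h0V : (0 : Fin (n + 1) → ℝ) ∈ V := hΩV (frontier_subset_closure h0)
  have hu0 : ContDiffAt ℝ 2 u 0 := hu.contDiffAt (hV.mem_nhds h0V)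
  have hnonpos : ∀ x ∈ closure Ω, u x ≤ 0 :=
    nonpos_of_trace_hess_pos hΩbd hV hΩV hu (fun x hx => (hconv x hx).1) fun x hx => (hbc x hx).le
  have hnormal : fderiv ℝ u 0 (Pi.single (Fin.last n) 1) ≤ 0 := by
    have hmax : IsLocalMaxOn u Ω 0 := IsMaxOn.localize fun x hx => by
      simpa [hbc 0 h0] using hnonpos x (subset_closure hx)
    refine hmax.hasFDerivWithinAt_nonpos
      (hu0.differentiableAt two_ne_zero).hasFDerivAt.hasFDerivWithinAt
      (mem_posTangentConeAt_of_frequently_mem ?_)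
    exact (eventually_add_smul_single_last_mem hUeq hU hφ0.le).frequently
  have hboundary : 0 ≤ (hess u 0).trace ∧ sigma2M (hess u 0) = 1 := by
    set S := {A : Matrix (Fin (n + 1)) (Fin (n + 1)) ℝ | 0 ≤ A.trace ∧ sigma2M A = 1}
    have hclosed : IsClosed S := (isClosed_le continuous_const continuous_id.matrix_trace).inter
      (isClosed_eq continuous_sigma2M continuous_const)
    have himage : hess u '' Ω ⊆ S :=
      Set.image_subset_iff.2 fun x hx => ⟨(hconv x hx).1.le, heq x hx⟩
    have hcont : ContinuousAt (hess u) 0 := (continuousOn_hess hV hu).continuousAt (hV.mem_nhds h0V)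
    exact closure_minimal himage hclosed
      (hcont.continuousWithinAt.mem_closure_image (frontier_subset_closure h0))
  have htangential : 0 < ∑ i : Fin n, hess u 0 i.castSucc i.castSucc :=
    sum_castSucc_pos_of_sigma2M_diagonal_pos hboundary.1
      (hboundary.2 ▸ one_pos |>.trans_le (sigma2M_le_sigma2M_diagonal_diag (hess_isSymm hu0)))
  simp only [hess_castSucc_eq_of_graph hUeq hU hφ hφ0 hdφ0 hu0 hbc, ← Finset.mul_sum] at htangential
  exact pos_of_mul_pos_right htangential (neg_nonneg.2 hnormal)

/-- If u is a 2-convex solution of σ₂(D²u) = 1 in a bounded smooth domain Ω with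
u = 0 on ∂Ω, then the mean curvature of ∂Ω is strictly positive at every boundary
point.  The boundary point is taken to be the origin and ∂Ω is written locally as a
graph xₙ = φ(x') with φ(0) = 0, Dφ(0) = 0 and Ω above the graph, so that the mean
curvature with respect to the outer normal is Σᵢ h_{ii} = Σᵢ φ_{ii}(0) = Δφ(0). -/
theorem mean_curvature_positive {n : ℕ}
    (Ω : Set (Fin (n + 1) → ℝ)) (hΩopen : IsOpen Ω) (hΩbd : Bornology.IsBounded Ω)
    (u : (Fin (n + 1) → ℝ) → ℝ)
    (V : Set (Fin (n + 1) → ℝ)) (hV : IsOpen V) (hΩV : closure Ω ⊆ V)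
    (hu : ContDiffOn ℝ 2 u V)
    (hconv : ∀ x ∈ Ω, 0 < (hess u x).trace ∧ 0 < sigma2M (hess u x))
    (heq : ∀ x ∈ Ω, sigma2M (hess u x) = 1)
    (hbc : ∀ x ∈ frontier Ω, u x = 0)
    (φ : (Fin n → ℝ) → ℝ) (hφ : ContDiff ℝ 2 φ)
    (hφ0 : φ 0 = 0) (hdφ0 : fderiv ℝ φ 0 = 0)
    (h0 : (0 : Fin (n + 1) → ℝ) ∈ frontier Ω)
    (hgraph : ∃ U ∈ nhds (0 : Fin (n + 1) → ℝ),
      Ω ∩ U = {x ∈ U | φ (fun i => x i.castSucc) < x (Fin.last n)}) :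
    0 < ∑ i : Fin n, hess φ 0 i i :=
  mean_curvature_positive_general Ω hΩbd u V hV hΩV hu hconv heq hbc φ hφ hφ0 hdφ0 h0 hgraph
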